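/- arXiv:1503.04702 — 3 statements merged into one kernel-verified Lean document; each statement's English description precedes it below -/
import Mathlib

section
/- For any finite simple graph G with vertex cover number τ(G) > 1, one has 2·δ_loc(G) ≤ τ(G) + log₂(τ(G)). -/
/-!
Let `S` be a minimum vertex cover, so `Sᶜ` is independent and every vertex of `S` has a neighbour
in `Sᶜ`, and let `L = ⌊log₂ τ⌋`. Choose `L + 1` disjoint generators: singletons of `Sᶜ` and, if
`Sᶜ` is too small, pairs of vertices of `S` with the same neighbourhood in `Sᶜ` (pigeonhole over
the `2 ^ |Sᶜ| - 1` possible neighbourhoods). Every vertex outside `S` then has an even number of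
neighbours in each generator. Let `D` be the union of a uniformly random set of generators. A
vertex of `S` lies in `D ∪ Odd(D)` with probability at most `3/4` if it lies in a generator and
`1/2` otherwise; a vertex outside `S` with probability `1/2` if it lies in a generator and `0`
otherwise. Summing, the expected size of `D ∪ Odd(D)` is at most `(τ + L + 1) / 2`. The empty
choice contributes `0`, so some nonempty `D` has
`(2 ^ (L + 1) - 1) · 2 |D ∪ Odd(D)| ≤ 2 ^ (L + 1) (τ + L + 1)`, which for `τ < 2 ^ (L + 1)` forces
`2 |D ∪ Odd(D)| ≤ τ + L + 2`.
-/

open Finset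

open Classical in
/-- The odd-neighbourhood of `D` in `G`: vertices having an odd number of neighbours in `D`. -/
noncomputable def oddNbhd {V : Type*} [Fintype V] (G : SimpleGraph V) (D : Finset V) :
    Finset V :=
  Finset.univ.filter fun v => Odd ((D.filter fun u => G.Adj v u).card)

namespace Finset

section Powerset

variable {α : Type*} (c : α → ℕ)

theorem card_filter_odd_sum_le_card_filter_not_odd_sum (s : Finset α) :
    #{E ∈ s.powerset | Odd (∑ a ∈ E, c a)} ≤ #{E ∈ s.powerset | ¬Odd (∑ a ∈ E, c a)} := by
  -- `∑ E, (-1) ^ c(E) = ∏ a, (1 + (-1) ^ c a)` is a product of factors `0` and `2`.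
  have hsign : ∑ E ∈ s.powerset, (-1 : ℤ) ^ (∑ a ∈ E, c a) = ∏ a ∈ s, (1 + (-1) ^ c a) := by
    simp only [prod_one_add, prod_pow_eq_pow_sum]
  have hnonneg : 0 ≤ ∏ a ∈ s, (1 + (-1 : ℤ) ^ c a) :=
    prod_nonneg fun a _ => by rcases neg_one_pow_eq_or ℤ (c a) with h | h <;> simp [h]
  rw [← sum_filter_add_sum_filter_not _ (fun E => Odd (∑ a ∈ E, c a)),
    sum_congr rfl fun E hE => (mem_filter.1 hE).2.neg_one_pow,
    sum_congr rfl fun E hE => (Nat.not_odd_iff_even.1 (mem_filter.1 hE).2).neg_one_pow] at hsign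
  simp only [sum_const, nsmul_eq_mul, mul_neg, mul_one] at hsign
  omega

theorem two_mul_card_filter_odd_sum_le (s : Finset α) :
    2 * #{E ∈ s.powerset | Odd (∑ a ∈ E, c a)} ≤ 2 ^ #s := by
  have := card_filter_add_card_filter_not (s := s.powerset) (fun E => Odd (∑ a ∈ E, c a))
  have := card_filter_odd_sum_le_card_filter_not_odd_sum c s
  rw [card_powerset] at *
  omega

variable [DecidableEq α] {s : Finset α} {a : α}

theorem filter_notMem_powerset (s : Finset α) (a : α) :
    {E ∈ s.powerset | a ∉ E} = (s.erase a).powerset := by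
  ext E
  simp only [mem_filter, mem_powerset, subset_erase]

theorem two_mul_card_filter_mem_powerset (ha : a ∈ s) :
    2 * #{E ∈ s.powerset | a ∈ E} = 2 ^ #s := by
  have := card_filter_add_card_filter_not (s := s.powerset) (fun E => a ∈ E)
  rw [card_powerset, filter_notMem_powerset, card_powerset, ← card_erase_add_one ha,
    pow_succ] at *
  omega

theorem four_mul_card_filter_mem_or_odd_sum_le (ha : a ∈ s) :
    4 * #{E ∈ s.powerset | a ∈ E ∨ Odd (∑ b ∈ E, c b)} ≤ 3 * 2 ^ #s := by
  have hcompl : {E ∈ s.powerset | ¬(a ∈ E ∨ Odd (∑ b ∈ E, c b))} =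
      {E ∈ (s.erase a).powerset | ¬Odd (∑ b ∈ E, c b)} := by
    rw [← filter_notMem_powerset, filter_filter]
    simp only [not_or]
  have htotal := card_filter_add_card_filter_not (s := s.powerset)
    (fun E => a ∈ E ∨ Odd (∑ b ∈ E, c b))
  have hhalf := card_filter_add_card_filter_not (s := (s.erase a).powerset)
    (fun E => Odd (∑ b ∈ E, c b))
  have := card_filter_odd_sum_le_card_filter_not_odd_sum c (s.erase a)
  rw [hcompl, card_powerset, ← card_erase_add_one ha, pow_succ] at htotal
  rw [card_powerset] at hhalf
  rw [← card_erase_add_one ha, pow_succ]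
  omega

end Powerset

theorem sum_card_eq_sum_card_filter_mem {ι α : Type*} [Fintype α] [DecidableEq α]
    (s : Finset ι) (t : ι → Finset α) : ∑ i ∈ s, #(t i) = ∑ a, #{i ∈ s | a ∈ t i} := by
  simp only [card_filter]
  rw [sum_comm]
  simp

theorem exists_pairwiseDisjoint_pairs_of_mapsTo {α β : Type*} [DecidableEq α]
    {f : α → β} {t : Finset β} (p : ℕ) {s : Finset α} (hf : ∀ a ∈ s, f a ∈ t)
    (hp : 2 * p + #t ≤ #s + 1) :
    ∃ P : Finset (Finset α), #P = p ∧ (P : Set (Finset α)).PairwiseDisjoint id ∧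
      ∀ g ∈ P, g ⊆ s ∧ #g = 2 ∧ ∀ a ∈ g, ∀ b ∈ g, f a = f b := by
  induction p generalizing s with
  | zero => exact ⟨∅, by simp⟩
  | succ p ih =>
    obtain ⟨a, ha, b, hb, hab, hfab⟩ :=
      exists_ne_map_eq_of_card_lt_of_maps_to (by omega : #t < #s) hf
    have hsub : {a, b} ⊆ s := insert_subset ha (singleton_subset_iff.2 hb)
    have hcard : #(s \ {a, b}) = #s - 2 := by rw [card_sdiff_of_subset hsub, card_pair hab]
    obtain ⟨P, hPcard, hPdisj, hP⟩ :=
      ih (s := s \ {a, b}) (fun c hc => hf c (mem_sdiff.1 hc).1) (by omega)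
    have hdisj : ∀ g ∈ P, Disjoint {a, b} g := fun g hg =>
      disjoint_of_subset_right (hP g hg).1 disjoint_sdiff
    have hnotMem : {a, b} ∉ P := fun h =>
      insert_ne_empty a {b} (disjoint_self.1 (hdisj _ h))
    refine ⟨insert {a, b} P, by rw [card_insert_of_notMem hnotMem, hPcard], ?_, ?_⟩
    · rw [coe_insert]
      exact hPdisj.insert fun g hg _ => hdisj g hg
    · simp only [mem_insert, forall_eq_or_imp]
      refine ⟨⟨hsub, card_pair hab, ?_⟩, fun g hg => ⟨(hP g hg).1.trans sdiff_subset, (hP g hg).2⟩⟩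
      simp [hfab]

end Finset

theorem Nat.two_mul_add_two_pow_le {m : ℕ} (hm : 1 ≤ m) (j : ℕ) :
    2 * j + 2 ^ m ≤ 2 ^ (m + j) := by
  have h1 : j + 1 ≤ 2 ^ j := Nat.lt_two_pow_self
  have h2 : 2 ≤ 2 ^ m := by simpa using Nat.pow_le_pow_right two_pos hm
  rw [pow_add]
  nlinarith

theorem two_mul_le_of_pow_sub_one_mul_le {c t L : ℕ} (hL : 1 ≤ L) (ht : t < 2 ^ (L + 1))
    (h : (2 ^ (L + 1) - 1) * (2 * c) ≤ 2 ^ (L + 1) * (t + (L + 1))) : 2 * c ≤ t + L + 2 := by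
  have hX : L + 3 ≤ 2 ^ (L + 1) := by
    have := Nat.two_mul_add_two_pow_le le_rfl L
    rw [add_comm 1 L] at this
    omega
  obtain ⟨Y, hY⟩ : ∃ Y, 2 ^ (L + 1) = Y + 1 := ⟨_, (Nat.succ_pred_eq_of_pos (by positivity)).symm⟩
  rw [hY, Nat.add_sub_cancel] at h
  rw [hY] at ht hX
  by_contra! hc
  nlinarith

namespace SimpleGraph

variable {V : Type*} [Fintype V] (G : SimpleGraph V) [DecidableRel G.Adj]

theorem mem_oddNbhd {D : Finset V} {v : V} :
    v ∈ oddNbhd G D ↔ Odd #{u ∈ D | G.Adj v u} := by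
  rw [oddNbhd, mem_filter]
  simp only [mem_univ, true_and]
  congr!

variable {G} {S : Finset V}

theorem IsVertexCover.exists_adj_notMem (hS : G.IsVertexCover S)
    (hmin : ∀ T : Finset V, G.IsVertexCover T → #S ≤ #T) {s : V} (hs : s ∈ S) :
    ∃ v ∉ S, G.Adj s v := by
  classical
  by_contra! h
  have hcover : G.IsVertexCover (S.erase s : Finset V) := fun v w hvw => by
    simp only [coe_erase, Set.mem_sdiff, mem_coe, Set.mem_singleton_iff]
    rcases eq_or_ne v s with rfl | hv
    · exact Or.inr ⟨by_contra fun hw => h w hw hvw, hvw.ne'⟩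
    rcases eq_or_ne w s with rfl | hw
    · exact Or.inl ⟨by_contra fun hv' => h v hv' hvw.symm, hv⟩
    · exact (hS hvw).imp (⟨·, hv⟩) (⟨·, hw⟩)
  exact (card_erase_lt_of_mem hs).not_ge (hmin _ hcover)

variable [DecidableEq V]

theorem mem_biUnion_union_oddNbhd {𝒢 E : Finset (Finset V)}
    (h𝒢 : (𝒢 : Set (Finset V)).PairwiseDisjoint id) (hE : E ⊆ 𝒢) (u : V) :
    u ∈ E.biUnion id ∪ oddNbhd G (E.biUnion id) ↔
      (∃ g ∈ E, u ∈ g) ∨ Odd (∑ g ∈ E, #{w ∈ g | G.Adj u w}) := by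
  rw [mem_union, mem_biUnion, mem_oddNbhd, filter_biUnion, card_biUnion]
  · rfl
  · exact (h𝒢.subset hE).mono fun g => filter_subset _ g

variable (G) in
/-- The weight `if u ∈ S then 1 else 2` of a generator vertex `u` is, in units of `2 ^ #𝒢 / 4`,
how much `u` can add to `∑ E ⊆ 𝒢, #(⋃ E ∪ Odd (⋃ E))` beyond the `2 ^ #𝒢 / 2` that every vertex
of `S` may contribute anyway. -/
structure IsBalancedFamily (S : Finset V) (𝒢 : Finset (Finset V)) : Prop where
  pairwiseDisjoint : (𝒢 : Set (Finset V)).PairwiseDisjoint id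
  empty_notMem : ∅ ∉ 𝒢
  sum_weight_le : ∀ g ∈ 𝒢, ∑ u ∈ g, (if u ∈ S then 1 else 2) ≤ 2
  even_card_adj : ∀ g ∈ 𝒢, ∀ u ∉ S, Even #{w ∈ g | G.Adj u w}

variable {𝒢 : Finset (Finset V)}

theorem IsBalancedFamily.four_mul_card_filter_mem_le (h𝒢 : G.IsBalancedFamily S 𝒢) (u : V) :
    4 * #{E ∈ 𝒢.powerset | u ∈ E.biUnion id ∪ oddNbhd G (E.biUnion id)} ≤
      2 ^ #𝒢 * ((if u ∈ S then 2 else 0) +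
        if u ∈ 𝒢.biUnion id then (if u ∈ S then 1 else 2) else 0) := by
  rw [filter_congr fun E hE =>
    G.mem_biUnion_union_oddNbhd h𝒢.pairwiseDisjoint (mem_powerset.1 hE) u]
  have hnotS (hu : u ∉ S) (E : Finset (Finset V)) (hE : E ∈ 𝒢.powerset) :
      ¬Odd (∑ g ∈ E, #{w ∈ g | G.Adj u w}) :=
    Nat.not_odd_iff_even.2 <| even_sum _ fun g hg =>
      h𝒢.even_card_adj g (mem_powerset.1 hE hg) u hu
  by_cases hu𝒢 : u ∈ 𝒢.biUnion id
  · obtain ⟨g₀, hg₀, hug₀⟩ := mem_biUnion.1 hu𝒢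
    have hg₀_iff (E : Finset (Finset V)) (hE : E ∈ 𝒢.powerset) : (∃ g ∈ E, u ∈ g) ↔ g₀ ∈ E := by
      refine ⟨fun ⟨g, hgE, hug⟩ => ?_, fun h => ⟨g₀, h, hug₀⟩⟩
      rwa [← h𝒢.pairwiseDisjoint.elim_finset (mem_powerset.1 hE hgE) hg₀ u hug hug₀]
    rw [filter_congr fun E hE => or_congr_left (hg₀_iff E hE)]
    by_cases huS : u ∈ S
    · have := four_mul_card_filter_mem_or_odd_sum_le (fun g => #{w ∈ g | G.Adj u w}) hg₀
      simp only [huS, hu𝒢, if_true]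
      omega
    · rw [filter_congr fun E hE => or_iff_left (hnotS huS E hE)]
      have := two_mul_card_filter_mem_powerset hg₀
      simp only [huS, hu𝒢, if_true, if_false]
      omega
  · have hnone (E : Finset (Finset V)) (hE : E ∈ 𝒢.powerset) : ¬∃ g ∈ E, u ∈ g :=
      fun ⟨g, hgE, hug⟩ => hu𝒢 (mem_biUnion.2 ⟨g, mem_powerset.1 hE hgE, hug⟩)
    rw [filter_congr fun E hE => or_iff_right (hnone E hE)]
    by_cases huS : u ∈ S
    · have := two_mul_card_filter_odd_sum_le (fun g => #{w ∈ g | G.Adj u w}) 𝒢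
      simp only [huS, hu𝒢, if_true, if_false]
      omega
    · simp [filter_false_of_mem (hnotS huS), huS, hu𝒢]

theorem IsBalancedFamily.sum_card_le (h𝒢 : G.IsBalancedFamily S 𝒢) :
    ∑ E ∈ 𝒢.powerset, 2 * #(E.biUnion id ∪ oddNbhd G (E.biUnion id)) ≤
      2 ^ #𝒢 * (#S + #𝒢) := by
  have hweight :
      ∑ u, (if u ∈ 𝒢.biUnion id then (if u ∈ S then 1 else 2) else 0) ≤ 2 * #𝒢 := by
    rw [sum_ite_mem, univ_inter, sum_biUnion h𝒢.pairwiseDisjoint, mul_comm, ← smul_eq_mul,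
      ← sum_const]
    exact sum_le_sum h𝒢.sum_weight_le
  have hS : ∑ u, (if u ∈ S then 2 else 0) = 2 * #S := by
    rw [sum_ite_mem, univ_inter, sum_const, smul_eq_mul, mul_comm]
  suffices ∑ E ∈ 𝒢.powerset, 4 * #(E.biUnion id ∪ oddNbhd G (E.biUnion id)) ≤
      2 ^ #𝒢 * (2 * #S + 2 * #𝒢) by
    rw [← mul_sum] at this ⊢
    linarith
  calc ∑ E ∈ 𝒢.powerset, 4 * #(E.biUnion id ∪ oddNbhd G (E.biUnion id))
      = ∑ u, 4 * #{E ∈ 𝒢.powerset | u ∈ E.biUnion id ∪ oddNbhd G (E.biUnion id)} := by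
        rw [← mul_sum, ← mul_sum, sum_card_eq_sum_card_filter_mem]
    _ ≤ ∑ u, 2 ^ #𝒢 * ((if u ∈ S then 2 else 0) +
          if u ∈ 𝒢.biUnion id then (if u ∈ S then 1 else 2) else 0) :=
        sum_le_sum fun u _ => h𝒢.four_mul_card_filter_mem_le u
    _ ≤ 2 ^ #𝒢 * (2 * #S + 2 * #𝒢) := by
        rw [← mul_sum, sum_add_distrib, hS]
        gcongr

theorem IsBalancedFamily.exists_card_union_oddNbhd_le (h𝒢 : G.IsBalancedFamily S 𝒢)
    (hne : 𝒢.Nonempty) :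
    ∃ D : Finset V, D.Nonempty ∧
      (2 ^ #𝒢 - 1) * (2 * #(D ∪ oddNbhd G D)) ≤ 2 ^ #𝒢 * (#S + #𝒢) := by
  set f : Finset (Finset V) → ℕ := fun E => 2 * #(E.biUnion id ∪ oddNbhd G (E.biUnion id))
  have hcard : #(𝒢.powerset.erase ∅) = 2 ^ #𝒢 - 1 := by
    rw [card_erase_of_mem (empty_mem_powerset 𝒢), card_powerset]
  obtain ⟨g, hg⟩ := hne
  have hne' : (𝒢.powerset.erase ∅).Nonempty :=
    ⟨{g}, mem_erase.2 ⟨singleton_ne_empty g, by simpa using hg⟩⟩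
  obtain ⟨E, hE, hEmin⟩ := exists_le_of_sum_le hne'
    (f := fun E => #(𝒢.powerset.erase ∅) * f E)
    (g := fun _ => ∑ E ∈ 𝒢.powerset.erase ∅, f E) (by rw [← mul_sum, sum_const, smul_eq_mul])
  obtain ⟨hEne, hE𝒢⟩ := mem_erase.1 hE
  obtain ⟨g, hgE⟩ := nonempty_iff_ne_empty.2 hEne
  obtain ⟨v, hv⟩ := nonempty_iff_ne_empty.2
    (ne_of_mem_of_not_mem (mem_powerset.1 hE𝒢 hgE) h𝒢.empty_notMem)
  refine ⟨E.biUnion id, ⟨v, mem_biUnion.2 ⟨g, hgE, hv⟩⟩, ?_⟩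
  rw [← hcard]
  calc _ ≤ ∑ E ∈ 𝒢.powerset.erase ∅, f E := hEmin
    _ ≤ ∑ E ∈ 𝒢.powerset, f E := sum_le_sum_of_subset (erase_subset _ _)
    _ ≤ _ := h𝒢.sum_card_le

theorem isBalancedFamily_image_singleton_union (hS : G.IsVertexCover S) {J : Finset V}
    (hJ : Disjoint J S) {P : Finset (Finset V)} (hPdisj : (P : Set (Finset V)).PairwiseDisjoint id)
    (hP : ∀ g ∈ P, g ⊆ S ∧ #g = 2 ∧
      ∀ a ∈ g, ∀ b ∈ g, {v ∈ Sᶜ | G.Adj a v} = {v ∈ Sᶜ | G.Adj b v}) :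
    G.IsBalancedFamily S (J.image singleton ∪ P) := by
  have hJS {v : V} (hv : v ∈ J) : v ∉ S := Finset.disjoint_left.1 hJ hv
  refine ⟨?_, ?_, ?_, ?_⟩
  · rw [coe_union]
    refine Set.PairwiseDisjoint.union ?_ hPdisj ?_
    · rintro _ hg _ hg' hne
      obtain ⟨v, -, rfl⟩ := mem_image.1 hg
      obtain ⟨w, -, rfl⟩ := mem_image.1 hg'
      exact disjoint_singleton.2 fun h => hne (h ▸ rfl)
    · rintro _ hg g hg' -
      obtain ⟨v, hv, rfl⟩ := mem_image.1 hg
      exact disjoint_singleton_left.2 fun hvg => hJS hv ((hP g hg').1 hvg)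
  · rw [mem_union, mem_image, not_or, not_exists]
    exact ⟨fun v h => singleton_ne_empty v h.2, fun h => by simpa using (hP ∅ h).2.1⟩
  · intro g hg
    rcases mem_union.1 hg with hg | hg
    · obtain ⟨v, hv, rfl⟩ := mem_image.1 hg
      simp [hJS hv]
    · rw [sum_congr rfl fun u hu => if_pos ((hP g hg).1 hu), sum_const, (hP g hg).2.1,
        smul_eq_mul, mul_one]
  · intro g hg u hu
    rcases mem_union.1 hg with hg | hg
    · obtain ⟨v, hv, rfl⟩ := mem_image.1 hg
      have : ¬G.Adj u v := fun huv => (hS huv).elim hu (hJS hv)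
      simp [filter_singleton, this]
    · obtain ⟨hgS, hg2, hpat⟩ := hP g hg
      obtain ⟨a, ha⟩ := card_pos.1 (hg2 ▸ two_pos)
      have hadj (b : V) (hb : b ∈ g) : G.Adj u b ↔ G.Adj u a := by
        simpa [hu, adj_comm] using congr(u ∈ $(hpat b hb a ha))
      by_cases hua : G.Adj u a
      · rw [filter_true_of_mem fun b hb => (hadj b hb).2 hua, hg2]
        exact even_two
      · rw [filter_false_of_mem fun b hb => mt (hadj b hb).1 hua, card_empty]
        exact Even.zero

theorem exists_isBalancedFamily (hS : G.IsVertexCover S) (hmin : ∀ s ∈ S, ∃ v ∉ S, G.Adj s v)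
    {k : ℕ} (hk : 2 ^ k ≤ #S) : ∃ 𝒢, G.IsBalancedFamily S 𝒢 ∧ #𝒢 = k + 1 := by
  have hcard {J : Finset V} {P : Finset (Finset V)} (hP : ∀ g ∈ P, #g = 2) :
      #(J.image singleton ∪ P) = #J + #P := by
    rw [card_union_of_disjoint, card_image_of_injective _ singleton_injective]
    exact Finset.disjoint_left.2 fun g hg hgP => by
      obtain ⟨v, -, rfl⟩ := mem_image.1 hg
      simpa using hP _ hgP
  by_cases hkI : k + 1 ≤ #Sᶜ
  · obtain ⟨J, hJ, hJcard⟩ := exists_subset_card_eq hkI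
    refine ⟨J.image singleton ∪ ∅, isBalancedFamily_image_singleton_union hS
      (disjoint_of_subset_left hJ disjoint_compl_left) (by simp) (by simp), ?_⟩
    rw [hcard (by simp), hJcard, card_empty]
  · obtain ⟨s, hs⟩ : S.Nonempty := card_pos.1 (lt_of_lt_of_le (Nat.two_pow_pos k) hk)
    obtain ⟨v, hv, -⟩ := hmin s hs
    have hm : 1 ≤ #Sᶜ := card_pos.2 ⟨v, mem_compl.2 hv⟩
    have hpat (s : V) (hs : s ∈ S) : {v ∈ Sᶜ | G.Adj s v} ∈ Sᶜ.powerset.erase ∅ := by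
      obtain ⟨v, hv, hsv⟩ := hmin s hs
      exact mem_erase.2 ⟨nonempty_iff_ne_empty.1 ⟨v, by simp [hv, hsv]⟩,
        mem_powerset.2 (filter_subset _ _)⟩
    have hT : #(Sᶜ.powerset.erase ∅) + 1 = 2 ^ #Sᶜ := by
      rw [card_erase_add_one (empty_mem_powerset _), card_powerset]
    obtain ⟨j, rfl⟩ : ∃ j, k = #Sᶜ + j := ⟨k - #Sᶜ, by omega⟩
    have := Nat.two_mul_add_two_pow_le hm j
    obtain ⟨P, hPcard, hPdisj, hP⟩ :=
      exists_pairwiseDisjoint_pairs_of_mapsTo (j + 1) hpat (by omega)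
    refine ⟨Sᶜ.image singleton ∪ P, isBalancedFamily_image_singleton_union hS
      disjoint_compl_left hPdisj hP, ?_⟩
    rw [hcard fun g hg => (hP g hg).2.1, hPcard]
    ring

end SimpleGraph

/-- For any finite simple graph `G` with vertex cover number `τ(G) > 1`,
`2 δ_loc(G) ≤ τ(G) + log₂(τ(G))`, where
`δ_loc(G) + 1 = min_{∅ ≠ D ⊆ V} |D ∪ Odd_G(D)|`. -/
theorem two_dloc_le_tau_add_log {V : Type*} [Fintype V] [DecidableEq V]
    (G : SimpleGraph V) (dloc tau : ℕ)
    (hd : dloc + 1 = sInf {m : ℕ | ∃ D : Finset V, D.Nonempty ∧ (D ∪ oddNbhd G D).card = m})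
    (ht : tau = sInf {m : ℕ | ∃ S : Finset V,
      (∀ u v : V, G.Adj u v → u ∈ S ∨ v ∈ S) ∧ S.card = m})
    (htau : 1 < tau) :
    2 * (dloc : ℝ) ≤ (tau : ℝ) + Real.logb 2 (tau : ℝ) := by
  classical
  obtain ⟨S, hScov, hScard⟩ := Nat.sInf_mem (s := {m : ℕ | ∃ S : Finset V,
    (∀ u v : V, G.Adj u v → u ∈ S ∨ v ∈ S) ∧ #S = m})
    ⟨_, univ, fun u _ _ => Or.inl (mem_univ u), rfl⟩
  rw [← ht] at hScard
  have hS : G.IsVertexCover S := fun u v huv => hScov u v huv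
  have hmin (s : V) (hs : s ∈ S) : ∃ v ∉ S, G.Adj s v :=
    hS.exists_adj_notMem (fun T hT => hScard ▸ ht ▸ Nat.sInf_le ⟨T, fun _ _ h => hT h, rfl⟩) hs
  set L := Nat.log 2 tau
  obtain ⟨𝒢, h𝒢, h𝒢card⟩ :=
    G.exists_isBalancedFamily hS hmin (hScard ▸ Nat.pow_log_le_self 2 (by omega) : 2 ^ L ≤ #S)
  obtain ⟨D, hD, hDcard⟩ := h𝒢.exists_card_union_oddNbhd_le (card_pos.1 (by omega))
  rw [h𝒢card, hScard] at hDcard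
  have hDL := two_mul_le_of_pow_sub_one_mul_le (Nat.log_pos one_lt_two htau)
    (Nat.lt_pow_succ_log_self one_lt_two tau) hDcard
  have hdloc : dloc + 1 ≤ #(D ∪ oddNbhd G D) := hd ▸ Nat.sInf_le ⟨D, hD, rfl⟩
  have hlog : (L : ℝ) ≤ Real.logb 2 tau := Real.natLog_le_logb tau 2
  have : 2 * dloc ≤ tau + L := by omega
  have : (2 * dloc : ℝ) ≤ tau + L := by exact_mod_cast this
  linarith
end

section
/- For any finite simple graph G of order n > 0, there exists a nonempty set D of vertices with |D ∪ Odd_G(D)| ≤ ⌊n/2⌋ + 1; equivalently, δ_loc(G) ≤ n/2. -/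
/-!
The map `D ↦ (D ∩ T, Odd_G(D) ∩ T)` is additive for symmetric difference, since `Odd_G` is the
`𝔽₂`-linear map given by the adjacency matrix. If `2|T| < n` it is not injective on the `2ⁿ`
vertex sets, and the symmetric difference of a colliding pair is a nonempty `D` with `D ∪ Odd_G(D)`
disjoint from `T`. Taking `|T| = n - ⌊n/2⌋ - 1` gives `|D ∪ Odd_G(D)| ≤ ⌊n/2⌋ + 1`.
-/

open Finset

open scoped symmDiff

namespace Finset

variable {α : Type*} [DecidableEq α]

theorem card_symmDiff_add_two_mul_card_inter (s t : Finset α) :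
    #(s ∆ t) + 2 * #(s ∩ t) = #s + #t := by
  rw [symmDiff_def, sup_eq_union, card_union_of_disjoint disjoint_sdiff_sdiff]
  have hs := card_sdiff_add_card_inter s t
  have ht := card_sdiff_add_card_inter t s
  rw [inter_comm] at ht
  omega

theorem odd_card_symmDiff_iff (s t : Finset α) : Odd #(s ∆ t) ↔ Odd (#s + #t) := by
  rw [← card_symmDiff_add_two_mul_card_inter]
  simp [Nat.odd_add]

theorem filter_symmDiff (p : α → Prop) [DecidablePred p] (s t : Finset α) :
    (s ∆ t).filter p = s.filter p ∆ t.filter p := by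
  ext
  simp only [mem_filter, mem_symmDiff]
  tauto

theorem disjoint_symmDiff_left_of_inter_eq {s t u : Finset α} (h : s ∩ u = t ∩ u) :
    Disjoint (s ∆ t) u := by
  rw [disjoint_iff, inf_symmDiff_distrib_right, inf_eq_inter, inf_eq_inter, h, symmDiff_self]

end Finset

section

variable {V : Type*} [Fintype V] (G : SimpleGraph V)

open Classical in
theorem mem_oddNbhd {D : Finset V} {v : V} :
    v ∈ oddNbhd G D ↔ Odd #(D.filter (G.Adj v)) := by
  simp [oddNbhd]

variable [DecidableEq V]

theorem oddNbhd_symmDiff (D D' : Finset V) :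
    oddNbhd G (D ∆ D') = oddNbhd G D ∆ oddNbhd G D' := by
  classical
  ext v
  rw [mem_symmDiff, mem_oddNbhd, mem_oddNbhd, mem_oddNbhd, filter_symmDiff, odd_card_symmDiff_iff,
    Nat.odd_add, ← Nat.not_odd_iff_even]
  tauto

theorem exists_nonempty_disjoint_union_oddNbhd (T : Finset V) (hT : 2 * #T < Fintype.card V) :
    ∃ D : Finset V, D.Nonempty ∧ Disjoint (D ∪ oddNbhd G D) T := by
  have hcard : #(T.powerset ×ˢ T.powerset) < #(univ : Finset V).powerset := by
    rw [card_product, card_powerset, card_powerset, card_univ, ← pow_add]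
    exact Nat.pow_lt_pow_right one_lt_two (by omega)
  obtain ⟨D, -, D', -, hne, heq⟩ := exists_ne_map_eq_of_card_lt_of_maps_to hcard
    (f := fun D => (D ∩ T, oddNbhd G D ∩ T))
    (fun D _ => by simp)
  obtain ⟨hD, hOdd⟩ := Prod.ext_iff.mp heq
  refine ⟨D ∆ D', symmDiff_nonempty.2 hne, ?_⟩
  rw [disjoint_union_left, oddNbhd_symmDiff]
  exact ⟨disjoint_symmDiff_left_of_inter_eq hD, disjoint_symmDiff_left_of_inter_eq hOdd⟩

theorem exists_card_union_oddNbhd_le (hn : 0 < Fintype.card V) :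
    ∃ D : Finset V, D.Nonempty ∧ #(D ∪ oddNbhd G D) ≤ Fintype.card V / 2 + 1 := by
  obtain ⟨T, -, hT⟩ := exists_subset_card_eq (s := (univ : Finset V))
    (n := Fintype.card V - (Fintype.card V / 2 + 1)) (by rw [card_univ]; omega)
  obtain ⟨D, hD, hdisj⟩ := exists_nonempty_disjoint_union_oddNbhd G T (by omega)
  refine ⟨D, hD, ?_⟩
  have hle := card_le_card (subset_compl_iff_disjoint_right.mpr hdisj)
  rw [card_compl, hT] at hle
  omega

end

/-- For any finite simple graph `G` of order `n > 0`, there is a nonempty set `D` of vertices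
with `|D ∪ Odd_G(D)| ≤ ⌊n/2⌋ + 1`; equivalently `δ_loc(G) ≤ n/2`, where
`δ_loc(G) + 1 = min_{∅ ≠ D ⊆ V} |D ∪ Odd_G(D)|`. -/
theorem dloc_le_half {V : Type*} [Fintype V] [DecidableEq V]
    (G : SimpleGraph V)
    (hn : 0 < Fintype.card V) (dloc : ℕ)
    (hd : dloc + 1 = sInf {m : ℕ | ∃ D : Finset V, D.Nonempty ∧ (D ∪ oddNbhd G D).card = m}) :
    (∃ D : Finset V, D.Nonempty ∧ (D ∪ oddNbhd G D).card ≤ Fintype.card V / 2 + 1) ∧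
      (dloc : ℝ) ≤ (Fintype.card V : ℝ) / 2 := by
  obtain ⟨D, hD, hcard⟩ := exists_card_union_oddNbhd_le G hn
  refine ⟨⟨D, hD, hcard⟩, ?_⟩
  have hmin : dloc + 1 ≤ #(D ∪ oddNbhd G D) := hd ▸ Nat.sInf_le ⟨D, hD, rfl⟩
  rw [le_div_iff₀ two_pos]
  exact_mod_cast (by omega : dloc * 2 ≤ Fintype.card V)
end

section
/- Let G be a finite simple graph on n vertices, let k be an integer with 0 < k < n/2, and let S be any set of exactly ⌊n/2⌋ + k vertices. Then there exists a nonempty set F ⊆ S with F ∪ Odd_G(F) ⊆ S and |F ∪ Odd_G(F)| ≤ (3/4)·(⌊n/2⌋ + k)/(1 − 2^{1−2k}). -/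
/-!
Encode `F ⊆ V` by its indicator vector `x ∈ 𝔽₂^V`; then `Odd_G(F)` is the support of `A x`, where
`A` is the adjacency matrix. The `x` with `x_v = (A x)_v = 0` for every `v ∉ S` form a subgroup `X`
cut out by `2 (n - |S|)` conditions over `𝔽₂`, so `|X| ≥ 2^(2|S| - n) ≥ 2^(2k-1)`. For each `v`,
`x ↦ (x_v, (A x)_v)` is a homomorphism `X → 𝔽₂²`, so `v ∈ supp x ∪ supp (A x)` for at most `3/4`
of the `x ∈ X`. Averaging over `X`, the nonzero `x ∈ X` minimising `|supp x ∪ supp (A x)|` gives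
`(|X| - 1) |F ∪ Odd_G(F)| ≤ (3/4) |S| |X|`, and `|X| ≥ 2^(2k-1)` turns this into the bound.
-/

open Finset

theorem Fintype.exists_ne_pred_card_mul_le_sum {α : Type*} [Fintype α] [Nontrivial α]
    (a : α) (c : α → ℕ) : ∃ x ≠ a, (Fintype.card α - 1) * c x ≤ ∑ y, c y := by
  classical
  have hne : (univ.erase a).Nonempty := by
    obtain ⟨b, hb⟩ := exists_ne a
    exact ⟨b, mem_erase.2 ⟨hb, mem_univ b⟩⟩
  obtain ⟨x, hx, hmin⟩ := (univ.erase a).exists_min_image c hne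
  refine ⟨x, ne_of_mem_erase hx, ?_⟩
  calc (Fintype.card α - 1) * c x = #(univ.erase a) • c x := by
        rw [card_erase_of_mem (mem_univ a), card_univ, smul_eq_mul]
    _ ≤ ∑ y ∈ univ.erase a, c y := card_nsmul_le_sum _ _ _ hmin
    _ ≤ ∑ y, c y := sum_le_sum_of_subset (subset_univ _)

theorem Nat.two_pow_le_of_two_pow_le_mul_four_pow {n s N : ℕ} (hs : s ≤ n) (hn : n ≤ 2 * s)
    (h : 2 ^ n ≤ N * 4 ^ (n - s)) : 2 ^ (2 * s - n) ≤ N := by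
  have hsplit : 2 ^ n = 2 ^ (2 * s - n) * 4 ^ (n - s) := by
    rw [show (4 : ℕ) = 2 ^ 2 by norm_num, ← pow_mul, ← pow_add]
    congr 1
    omega
  rw [hsplit] at h
  exact Nat.le_of_mul_le_mul_right h (by positivity)

theorem le_div_one_sub_of_sub_one_mul_le {a b N t : ℝ} (ha : 0 ≤ a) (hN : 0 < N)
    (ht : N⁻¹ ≤ t) (ht1 : t < 1) (h : (N - 1) * a ≤ N * b) : a ≤ b / (1 - t) := by
  rw [le_div_iff₀ (by linarith)]
  calc a * (1 - t) ≤ a * (1 - N⁻¹) := mul_le_mul_of_nonneg_left (by linarith) ha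
    _ = (N - 1) * a / N := by field_simp
    _ ≤ b := by rw [div_le_iff₀ hN]; linarith

namespace AddMonoidHom

section Counting

variable {G H : Type*} [AddGroup G] [AddGroup H]

theorem card_le_card_ker_mul [Finite H] (f : G →+ H) :
    Nat.card G ≤ Nat.card f.ker * Nat.card H := by
  rw [← f.ker.card_mul_index, AddSubgroup.index_ker]
  exact Nat.mul_le_mul_left _ (Finite.card_subtype_le _)

theorem card_mul_card_filter_ne_zero_le [Fintype G] [Fintype H] [DecidableEq H] (f : G →+ H) :
    Fintype.card H * #{x | f x ≠ 0} ≤ (Fintype.card H - 1) * Fintype.card G := by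
  classical
  have hker : Nat.card f.ker = #{x | f x = 0} := by
    rw [← Fintype.card_subtype, ← Nat.card_eq_fintype_card]
    exact Nat.card_congr (Equiv.subtypeEquivRight fun x => f.mem_ker)
  have hsplit := card_filter_add_card_filter_not (s := univ) (fun x => f x = 0)
  have hcard := f.card_le_card_ker_mul
  rw [hker, Nat.card_eq_fintype_card, Nat.card_eq_fintype_card] at hcard
  rw [card_univ] at hsplit
  have hH : 1 ≤ Fintype.card H := Fintype.card_pos
  zify [hH] at *
  nlinarith

theorem sum_card_filter_ne_zero_le {ι : Type*} [Fintype G] [Fintype H] [DecidableEq H]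
    (f : ι → G →+ H) (S : Finset ι) :
    Fintype.card H * ∑ x, #{v ∈ S | f v x ≠ 0} ≤ (Fintype.card H - 1) * #S * Fintype.card G := by
  have hswap : ∑ x, #{v ∈ S | f v x ≠ 0} = ∑ v ∈ S, #{x | f v x ≠ 0} :=
    sum_card_bipartiteAbove_eq_sum_card_bipartiteBelow (fun x v => f v x ≠ 0)
  calc Fintype.card H * ∑ x, #{v ∈ S | f v x ≠ 0}
      = ∑ v ∈ S, Fintype.card H * #{x | f v x ≠ 0} := by rw [hswap, mul_sum]
    _ ≤ ∑ v ∈ S, (Fintype.card H - 1) * Fintype.card G :=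
      sum_le_sum fun v _ => (f v).card_mul_card_filter_ne_zero_le
    _ = (Fintype.card H - 1) * #S * Fintype.card G := by rw [sum_const, smul_eq_mul]; ring

end Counting

section VanishOutside

variable {M V W : Type*} [AddGroup M] [AddGroup W]

def vanishOutside (Φ : M →+ (V → W)) (S : Finset V) : AddSubgroup M :=
  (AddMonoidHom.pi fun v : {v // v ∉ S} => (Pi.evalAddMonoidHom (fun _ => W) v.1).comp Φ).ker

theorem mem_vanishOutside {Φ : M →+ (V → W)} {S : Finset V} {x : M} :
    x ∈ Φ.vanishOutside S ↔ ∀ v ∉ S, Φ x v = 0 := by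
  simp [vanishOutside, funext_iff, Subtype.forall]

theorem card_le_card_vanishOutside_mul [Fintype V] [Finite W] (Φ : M →+ (V → W)) (S : Finset V) :
    Nat.card M ≤ Nat.card (Φ.vanishOutside S) * Nat.card W ^ (Fintype.card V - #S) := by
  classical
  have h := card_le_card_ker_mul
    (AddMonoidHom.pi fun v : {v // v ∉ S} => (Pi.evalAddMonoidHom (fun _ => W) v.1).comp Φ)
  rwa [Nat.card_fun, Nat.card_eq_fintype_card (α := {v // v ∉ S}), Fintype.card_subtype_compl,
    Fintype.card_coe] at h

theorem filter_ne_zero_eq_of_mem_vanishOutside [Fintype V] [DecidableEq W] {Φ : M →+ (V → W)}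
    {S : Finset V} {x : M} (hx : x ∈ Φ.vanishOutside S) :
    {v ∈ S | Φ x v ≠ 0} = ({v | Φ x v ≠ 0} : Finset V) := by
  ext v
  have := mem_vanishOutside.1 hx v
  simp only [mem_filter, mem_univ, true_and, and_iff_right_iff_imp]
  tauto

theorem exists_ne_zero_mem_vanishOutside_card_mul_le [Finite M] [Fintype V] [Fintype W]
    [DecidableEq W] (Φ : M →+ (V → W)) (S : Finset V) [Nontrivial (Φ.vanishOutside S)] :
    ∃ x ∈ Φ.vanishOutside S, x ≠ 0 ∧
      (Nat.card (Φ.vanishOutside S) - 1) * (Fintype.card W * #{v | Φ x v ≠ 0}) ≤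
        (Fintype.card W - 1) * #S * Nat.card (Φ.vanishOutside S) := by
  classical
  set X := Φ.vanishOutside S
  have := Fintype.ofFinite X
  let f : V → X →+ W := fun v => (Pi.evalAddMonoidHom _ v).comp (Φ.comp X.subtype)
  obtain ⟨x, hx0, hx⟩ :=
    Fintype.exists_ne_pred_card_mul_le_sum (0 : X) fun x => #{v ∈ S | f v x ≠ 0}
  refine ⟨x, x.2, by simpa using hx0, ?_⟩
  rw [← filter_ne_zero_eq_of_mem_vanishOutside x.2, Nat.card_eq_fintype_card]
  calc (Fintype.card X - 1) * (Fintype.card W * #{v ∈ S | f v x ≠ 0})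
      = Fintype.card W * ((Fintype.card X - 1) * #{v ∈ S | f v x ≠ 0}) := by ring
    _ ≤ Fintype.card W * ∑ y, #{v ∈ S | f v y ≠ 0} := Nat.mul_le_mul_left _ hx
    _ ≤ (Fintype.card W - 1) * #S * Fintype.card X := sum_card_filter_ne_zero_le f S

end VanishOutside

end AddMonoidHom

namespace SimpleGraph

open Matrix

variable {V : Type*} [Fintype V] (G : SimpleGraph V) [DecidableRel G.Adj]

theorem oddNbhd_filter_ne_zero (x : V → ZMod 2) :
    oddNbhd G {u | x u ≠ 0} = ({v | (G.adjMatrix (ZMod 2) *ᵥ x) v ≠ 0} : Finset V) := by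
  have hx : ∀ u, x u = if x u ≠ 0 then 1 else 0 := fun u => by
    generalize x u = a; revert a; decide
  ext v
  simp only [oddNbhd, mem_filter, mem_univ, true_and]
  rw [adjMatrix_mulVec_apply, sum_congr rfl fun u _ => hx u, sum_boole,
    ZMod.natCast_ne_zero_iff_odd, neighborFinset_eq_filter, filter_filter, filter_filter]
  simp only [and_comm]
  congr!

def pairWithAdjMulVec : (V → ZMod 2) →+ (V → ZMod 2 × ZMod 2) where
  toFun x v := (x v, (G.adjMatrix (ZMod 2) *ᵥ x) v)
  map_zero' := by ext <;> simp
  map_add' x y := by ext <;> simp [sum_add_distrib]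

theorem filter_pairWithAdjMulVec_ne_zero [DecidableEq V] (x : V → ZMod 2) :
    ({v | pairWithAdjMulVec G x v ≠ 0} : Finset V) =
      ({u | x u ≠ 0} : Finset V) ∪ oddNbhd G {u | x u ≠ 0} := by
  ext v
  simp [oddNbhd_filter_ne_zero, pairWithAdjMulVec, Prod.ext_iff]
  tauto

theorem two_pow_le_card_vanishOutside (S : Finset V) (hS : Fintype.card V ≤ 2 * #S) :
    2 ^ (2 * #S - Fintype.card V) ≤ Nat.card ((pairWithAdjMulVec G).vanishOutside S) := by
  have h := (pairWithAdjMulVec G).card_le_card_vanishOutside_mul S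
  rw [Nat.card_fun, Nat.card_prod, Nat.card_zmod, Nat.card_eq_fintype_card (α := V)] at h
  exact Nat.two_pow_le_of_two_pow_le_mul_four_pow (card_le_univ S) hS h

end SimpleGraph

theorem exists_small_closed_set_in_large_cut_general {V : Type*} [Fintype V] [DecidableEq V]
    (G : SimpleGraph V) (k : ℕ) (hk0 : 0 < k)
    (S : Finset V) (hS : S.card = Fintype.card V / 2 + k) :
    ∃ F : Finset V, F.Nonempty ∧ F ⊆ S ∧ F ∪ oddNbhd G F ⊆ S ∧
      ((F ∪ oddNbhd G F).card : ℝ) ≤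
        (3 / 4 : ℝ) * ((Fintype.card V / 2 + k : ℕ) : ℝ) /
          (1 - (2 : ℝ) ^ ((1 : ℤ) - 2 * (k : ℤ))) := by
  classical
  set X := G.pairWithAdjMulVec.vanishOutside S
  have hX : 2 ^ (2 * k - 1) ≤ Nat.card X :=
    (Nat.pow_le_pow_right two_pos (by omega)).trans
      (G.two_pow_le_card_vanishOutside S (by omega))
  have : Nontrivial X :=
    Finite.one_lt_card_iff_nontrivial.1 ((Nat.one_lt_two_pow (by omega)).trans_le hX)
  obtain ⟨x, hxX, hx0, hx⟩ := G.pairWithAdjMulVec.exists_ne_zero_mem_vanishOutside_card_mul_le S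
  set F : Finset V := {u | x u ≠ 0}
  have hU : F ∪ oddNbhd G F = ({v | G.pairWithAdjMulVec x v ≠ 0} : Finset V) :=
    (G.filter_pairWithAdjMulVec_ne_zero x).symm
  have hFS : F ∪ oddNbhd G F ⊆ S :=
    hU ▸ AddMonoidHom.filter_ne_zero_eq_of_mem_vanishOutside hxX ▸ filter_subset _ _
  refine ⟨F, ?_, subset_union_left.trans hFS, hFS, ?_⟩
  · obtain ⟨u, hu⟩ := Function.ne_iff.1 hx0
    exact ⟨u, by simpa [F] using hu⟩
  have hpow : (2 : ℝ) ^ ((1 : ℤ) - 2 * k) = ((2 : ℝ) ^ (2 * k - 1))⁻¹ := by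
    rw [← zpow_natCast, ← zpow_neg]
    congr 1
    omega
  rw [hU, ← hS, hpow]
  simp only [Fintype.card_prod, ZMod.card] at hx
  refine le_div_one_sub_of_sub_one_mul_le (N := Nat.card X) (Nat.cast_nonneg _)
    (by exact_mod_cast Nat.card_pos)
    (inv_anti₀ (by positivity) (by exact_mod_cast hX))
    (inv_lt_one_of_one_lt₀ (one_lt_pow₀ one_lt_two (by omega))) ?_
  have h := (Nat.cast_le (α := ℝ)).2 hx
  push_cast [Nat.cast_sub Nat.card_pos] at h
  linarith

/-- Let `G` be a finite simple graph on `n` vertices, `0 < k < n/2`, and let `S` be a set of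
exactly `⌊n/2⌋ + k` vertices. Then there is a nonempty `F ⊆ S` with `F ∪ Odd_G(F) ⊆ S` and
`|F ∪ Odd_G(F)| ≤ (3/4) (⌊n/2⌋ + k) / (1 - 2^{1-2k})`. -/
theorem exists_small_closed_set_in_large_cut {V : Type*} [Fintype V] [DecidableEq V]
    (G : SimpleGraph V) (k : ℕ) (hk0 : 0 < k)
    (hk : (k : ℝ) < (Fintype.card V : ℝ) / 2)
    (S : Finset V) (hS : S.card = Fintype.card V / 2 + k) :
    ∃ F : Finset V, F.Nonempty ∧ F ⊆ S ∧ F ∪ oddNbhd G F ⊆ S ∧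
      ((F ∪ oddNbhd G F).card : ℝ) ≤
        (3 / 4 : ℝ) * ((Fintype.card V / 2 + k : ℕ) : ℝ) /
          (1 - (2 : ℝ) ^ ((1 : ℤ) - 2 * (k : ℤ))) :=
  exists_small_closed_set_in_large_cut_general G k hk0 S hS
end
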